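/- Let P be a non-empty closed convex set of BCEs. The following are equivalent: (i) sBCE ∩ P is dense in P; (ii) there exists a P-minimally mixed separated BCE; (iii) for all p ∈ P, players i, and actions a_i, b_i ∈ supp_i(p), p_{a_i} ≠ p_{b_i} implies J_P(a_i) ∩ J_P(b_i) = ∅, where J_P(c_i) = ∩{BR(q_{c_i}) : q ∈ P, c_i ∈ supp_i(q)} is the set of actions that P-jeopardize c_i. -/

import Mathlib

open Finset

variable {I : Type} [Fintype I] [DecidableEq I]
  {A : I → Type} [∀ i, Fintype (A i)] [∀ i, DecidableEq (A i)]
  {Θ : Type} [Fintype Θ]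

/-- The marginal probability that player `i` plays `ai` under outcome `p`. -/
noncomputable def marg (p : ((∀ j, A j) × Θ) → ℝ) (i : I) (ai : A i) : ℝ :=
  ∑ x : (∀ j, A j) × Θ, if x.1 i = ai then p x else 0

/-- The conditional belief of player `i` given recommendation `ai`, represented
as a function on full profile-state pairs that ignores the `i`-th coordinate
(it is overridden by `ai`).  It is the zero function if `marg p i ai = 0`. -/
noncomputable def condBelief (p : ((∀ j, A j) × Θ) → ℝ) (i : I) (ai : A i) :
    ((∀ j, A j) × Θ) → ℝ :=
  fun x => p (Function.update x.1 i ai, x.2) / marg p i ai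

/-- Expected utility for player `i` of playing `ci` against belief `μ`. -/
noncomputable def dev (u : ((∀ j, A j) × Θ) → ℝ) (i : I) (ci : A i)
    (μ : ((∀ j, A j) × Θ) → ℝ) : ℝ :=
  ∑ x : (∀ j, A j) × Θ, u (Function.update x.1 i ci, x.2) * μ x

/-- Best responses of player `i` (with utility `u`) to belief `μ`. -/
noncomputable def BRset (u : ((∀ j, A j) × Θ) → ℝ) (i : I)
    (μ : ((∀ j, A j) × Θ) → ℝ) : Set (A i) :=
  {ci | ∀ di : A i, dev u i di μ ≤ dev u i ci μ}

/-- The obedience constraint defining a Bayes correlated equilibrium. -/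
def Obedient (u : ∀ i : I, ((∀ j, A j) × Θ) → ℝ) (p : ((∀ j, A j) × Θ) → ℝ) : Prop :=
  ∀ i : I, ∀ ai bi : A i,
    0 ≤ ∑ x : (∀ j, A j) × Θ,
      (if x.1 i = ai then (u i x - u i (Function.update x.1 i bi, x.2)) * p x else 0)

/-- The separation constraint: recommendations inducing distinct beliefs have
disjoint best-response sets. -/
def Separated (u : ∀ i : I, ((∀ j, A j) × Θ) → ℝ) (p : ((∀ j, A j) × Θ) → ℝ) : Prop :=
  ∀ i : I, ∀ ai bi : A i, 0 < marg p i ai → 0 < marg p i bi →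
    condBelief p i ai ≠ condBelief p i bi →
    BRset (u i) i (condBelief p i ai) ∩ BRset (u i) i (condBelief p i bi) = ∅

/-- `p` is an outcome with `Θ`-marginal `π`. -/
def IsOutcome (π : Θ → ℝ) (p : ((∀ j, A j) × Θ) → ℝ) : Prop :=
  (∀ x, 0 ≤ p x) ∧ ∀ θ, (∑ a : ∀ j, A j, p (a, θ)) = π θ

/-- `p` is `P`-minimally mixed: it has `P`-maximal support, and any pair of
recommendations with distinct conditional beliefs under some `q ∈ P` also has
distinct conditional beliefs under `p`. -/
def MinMixed (P : Set (((∀ j, A j) × Θ) → ℝ)) (p : ((∀ j, A j) × Θ) → ℝ) : Prop :=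
  (∀ q ∈ P, ∀ i : I, ∀ ai : A i, 0 < marg q i ai → 0 < marg p i ai) ∧
  (∀ q ∈ P, ∀ i : I, ∀ ai bi : A i, 0 < marg q i ai → 0 < marg q i bi →
    condBelief q i ai ≠ condBelief q i bi → condBelief p i ai ≠ condBelief p i bi)

/-!
By obedience, `a` is a best response to the unnormalised conditional belief given `a` of every
BCE, and that belief is linear in the outcome; so if `r = (1 - l) • s + l • w` with `s, w ∈ P` and
`l > 0`, every best response to `r`'s belief given `a` is one to `w`'s. Hence a point of `P` that
mixes in, for each `c` not `P`-jeopardizing `a`, a witness at which `c` is not a best response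
has only jeopardizing best responses, and under (iii) it is separated; mixing any point slightly
towards such a point shows these points are dense. Distinct beliefs form an open set, and along a
segment towards a point with distinct beliefs the cross-multiplied difference of the beliefs is a
quadratic in the weight that is nonzero at the far end, hence nonzero at arbitrarily small
weights; so this set is dense too, and the intersection is a dense set of separated, minimally
mixed BCEs. Conversely, a separated point whose beliefs differ where those of some `p ∈ P` do,
found by density or by minimal mixedness, rules out a common jeopardizing action.
-/
open Filter Topology Polynomial

lemma dense_iInter_of_isOpen_of_finite {X ι : Type*} [TopologicalSpace X] [Finite ι]
    {f : ι → Set X} (ho : ∀ k, IsOpen (f k)) (hd : ∀ k, Dense (f k)) : Dense (⋂ k, f k) := by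
  simpa only [Set.sInter_range] using
    (Set.finite_range f).dense_sInter (Set.forall_mem_range.2 ho) (Set.forall_mem_range.2 hd)

lemma Polynomial.frequently_eval_ne_zero {p : ℝ[X]} (hp : p ≠ 0) (a : ℝ) :
    ∃ᶠ t in 𝓝[>] a, p.eval t ≠ 0 := by
  intro h
  obtain ⟨ε, hε, hsub⟩ := mem_nhdsGT_iff_exists_Ioo_subset.1 h
  exact hp (p.eq_zero_of_infinite_isRoot ((Set.Ioo_infinite hε).mono fun t ht => not_not.1 (hsub ht)))

lemma frequently_segment_mul_sub_mul_ne_zero {a₀ a₁ b₀ b₁ c₀ c₁ d₀ d₁ : ℝ}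
    (h : a₁ * b₁ - c₁ * d₁ ≠ 0) :
    ∃ᶠ t in 𝓝[>] (0 : ℝ), ((1 - t) * a₀ + t * a₁) * ((1 - t) * b₀ + t * b₁)
      - ((1 - t) * c₀ + t * c₁) * ((1 - t) * d₀ + t * d₁) ≠ 0 := by
  set p : ℝ[X] := ((1 - X) * C a₀ + X * C a₁) * ((1 - X) * C b₀ + X * C b₁)
    - ((1 - X) * C c₀ + X * C c₁) * ((1 - X) * C d₀ + X * C d₁)
  have hp : ∀ t, p.eval t = ((1 - t) * a₀ + t * a₁) * ((1 - t) * b₀ + t * b₁)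
      - ((1 - t) * c₀ + t * c₁) * ((1 - t) * d₀ + t * d₁) := fun t => by
    simp only [p, eval_sub, eval_mul, eval_add, eval_X, eval_C, eval_one]
  have hp0 : p ≠ 0 := fun h0 => h (by simpa [h0] using (hp 1).symm)
  simpa only [hp] using p.frequently_eval_ne_zero hp0 0

section Mixtures

variable {E : Type*} [AddCommGroup E] [Module ℝ E]

def InheritedByMixtures (P : Set E) (φ : E → Prop) : Prop :=
  ∀ ⦃w⦄, w ∈ P → ∀ ⦃s⦄, s ∈ P → ∀ ⦃l : ℝ⦄, 0 < l → l ≤ 1 → φ w → φ ((1 - l) • s + l • w)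

lemma exists_mem_forall_of_inheritedByMixtures {ι : Type*} [Finite ι] {P : Set E}
    (hP : Convex ℝ P) (hne : P.Nonempty) {φ : ι → E → Prop}
    (hφ : ∀ k, InheritedByMixtures P (φ k)) :
    ∃ m ∈ P, ∀ k, (∃ q ∈ P, φ k q) → φ k m := by
  classical
  have := Fintype.ofFinite ι
  suffices ∀ K : Finset ι, ∃ m ∈ P, ∀ k ∈ K, (∃ q ∈ P, φ k q) → φ k m by
    simpa using this univ
  intro K
  induction K using Finset.induction_on with
  | empty => exact hne.imp fun m hm => ⟨hm, by simp⟩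
  | insert k K _ ih =>
    obtain ⟨m, hm, hmK⟩ := ih
    by_cases hk : ∃ q ∈ P, φ k q
    · obtain ⟨q, hq, hφq⟩ := hk
      have hswap : (1 - 2⁻¹ : ℝ) • q + (2⁻¹ : ℝ) • m = (1 - 2⁻¹ : ℝ) • m + (2⁻¹ : ℝ) • q := by
        norm_num [add_comm]
      refine ⟨(1 - 2⁻¹ : ℝ) • m + (2⁻¹ : ℝ) • q, hP hm hq (by norm_num) (by norm_num) (by norm_num),
        fun j hj hjq => ?_⟩
      rcases Finset.mem_insert.1 hj with rfl | hj
      · exact hφ j hq hm (by norm_num) (by norm_num) hφq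
      · exact hswap ▸ hφ j hm hq (by norm_num) (by norm_num) (hmK j hj hjq)
    · refine ⟨m, hm, fun j hj hjq => ?_⟩
      rcases Finset.mem_insert.1 hj with rfl | hj
      · exact absurd hjq hk
      · exact hmK j hj hjq

variable [TopologicalSpace E] [ContinuousAdd E] [ContinuousSMul ℝ E]

lemma Convex.dense_setOf_of_frequently_segment {P : Set E} (hP : Convex ℝ P) {φ : E → Prop}
    (h : ∀ x ∈ P, ∃ q ∈ P, ∃ᶠ t in 𝓝[>] (0 : ℝ), φ ((1 - t) • x + t • q)) :
    Dense {x : P | φ x} := by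
  rintro ⟨x, hx⟩
  obtain ⟨q, hq, hφ⟩ := h x hx
  rw [closure_subtype]
  refine mem_closure_of_frequently_of_tendsto (f := fun t : ℝ => (1 - t) • x + t • q)
    ((hφ.and_eventually (Ioo_mem_nhdsGT one_pos)).mono ?_)
    (tendsto_nhdsWithin_of_tendsto_nhds ?_)
  · rintro t ⟨ht, ht0, ht1⟩
    exact ⟨⟨_, hP hx hq (by linarith) ht0.le (by ring)⟩, ht, rfl⟩
  · have hcont : Continuous fun t : ℝ => (1 - t) • x + t • q := by fun_prop
    simpa using hcont.tendsto 0

lemma dense_setOf_forall_of_inheritedByMixtures {ι : Type*} [Finite ι] {P : Set E}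
    (hP : Convex ℝ P) (hne : P.Nonempty) {φ : ι → E → Prop}
    (hφ : ∀ k, InheritedByMixtures P (φ k)) :
    Dense {x : P | ∀ k, (∃ q ∈ P, φ k q) → φ k x} := by
  obtain ⟨m, hm, hφm⟩ := exists_mem_forall_of_inheritedByMixtures hP hne hφ
  refine hP.dense_setOf_of_frequently_segment (φ := fun x => ∀ k, (∃ q ∈ P, φ k q) → φ k x)
    fun x hx => ⟨m, hm, Eventually.frequently ?_⟩
  filter_upwards [Ioo_mem_nhdsGT one_pos] with t ⟨ht0, ht1⟩
  exact fun k hk => hφ k hm hx ht0 ht1.le (hφm k hk)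

end Mixtures

section BestResponses

variable {I : Type} [Fintype I] [DecidableEq I] {A : I → Type} [∀ i, Fintype (A i)]
  {Θ : Type} [Fintype Θ]

lemma dev_add (v : ((∀ j, A j) × Θ) → ℝ) (i : I) (d : A i) (μ ν : ((∀ j, A j) × Θ) → ℝ) :
    dev v i d (μ + ν) = dev v i d μ + dev v i d ν := by
  simp only [dev, Pi.add_apply, mul_add, sum_add_distrib]

lemma dev_smul (v : ((∀ j, A j) × Θ) → ℝ) (i : I) (d : A i) (c : ℝ)
    (μ : ((∀ j, A j) × Θ) → ℝ) : dev v i d (c • μ) = c * dev v i d μ := by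
  simp only [dev, Pi.smul_apply, smul_eq_mul, mul_sum, mul_left_comm]

lemma BRset_smul (v : ((∀ j, A j) × Θ) → ℝ) (i : I) {c : ℝ} (hc : 0 < c)
    (μ : ((∀ j, A j) × Θ) → ℝ) : BRset v i (c • μ) = BRset v i μ := by
  ext a
  simp only [BRset, Set.mem_ofPred_eq, dev_smul, mul_le_mul_iff_of_pos_left hc]

lemma mem_BRset_of_mem_BRset_segment {v : ((∀ j, A j) × Θ) → ℝ} {i : I}
    {μ ν : ((∀ j, A j) × Θ) → ℝ} {a c : A i} {l : ℝ} (hl0 : 0 < l) (hl1 : l ≤ 1)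
    (haμ : a ∈ BRset v i μ) (haν : a ∈ BRset v i ν) (hc : c ∈ BRset v i ((1 - l) • ν + l • μ)) :
    c ∈ BRset v i μ := by
  have hca := hc a
  simp only [dev_add, dev_smul] at hca
  have hν := haν c
  have hμ : dev v i a μ ≤ dev v i c μ := by nlinarith
  exact fun d => (haμ d).trans hμ

end BestResponses

section Game

variable {P : Set (((∀ j, A j) × Θ) → ℝ)} {u : I → ((∀ j, A j) × Θ) → ℝ}

lemma sum_update_eq_card_mul (i : I) (a : A i) (g : ((∀ j, A j) × Θ) → ℝ) :
    ∑ x : (∀ j, A j) × Θ, g (Function.update x.1 i a, x.2)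
      = Fintype.card (A i) * ∑ x : (∀ j, A j) × Θ with x.1 i = a, g x := by
  calc ∑ x : (∀ j, A j) × Θ, g (Function.update x.1 i a, x.2)
      = ∑ c : A i, ∑ x : (∀ j, A j) × Θ with x.1 i = c, g (Function.update x.1 i a, x.2) :=
        (sum_fiberwise _ _ _).symm
    _ = ∑ c : A i, ∑ x : (∀ j, A j) × Θ with x.1 i = a, g x := by
        refine sum_congr rfl fun c _ => sum_nbij' (fun x => (Function.update x.1 i a, x.2))
          (fun x => (Function.update x.1 i c, x.2)) ?_ ?_ ?_ ?_ fun _ _ => rfl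
        all_goals intro x hx; simp_all [Prod.ext_iff]
    _ = Fintype.card (A i) * ∑ x : (∀ j, A j) × Θ with x.1 i = a, g x := by
        simp [sum_const]

lemma marg_eq_sum_filter (p : ((∀ j, A j) × Θ) → ℝ) (i : I) (a : A i) :
    marg p i a = ∑ x : (∀ j, A j) × Θ with x.1 i = a, p x :=
  (sum_filter _ _).symm

lemma marg_nonneg {p : ((∀ j, A j) × Θ) → ℝ} (hp : ∀ x, 0 ≤ p x) (i : I) (a : A i) :
    0 ≤ marg p i a := by
  rw [marg_eq_sum_filter]
  exact sum_nonneg fun x _ => hp x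

lemma continuous_marg (i : I) (a : A i) :
    Continuous fun p : ((∀ j, A j) × Θ) → ℝ => marg p i a := by
  simp only [marg_eq_sum_filter]
  fun_prop

lemma marg_segment (p q : ((∀ j, A j) × Θ) → ℝ) (t : ℝ) (i : I) (a : A i) :
    marg ((1 - t) • p + t • q) i a = (1 - t) * marg p i a + t * marg q i a := by
  simp only [marg_eq_sum_filter, Pi.add_apply, Pi.smul_apply, smul_eq_mul, sum_add_distrib,
    mul_sum]

lemma marg_segment_pos {p q : ((∀ j, A j) × Θ) → ℝ} (hp : ∀ x, 0 ≤ p x) {i : I} {a : A i}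
    (hq : 0 < marg q i a) {t : ℝ} (ht0 : 0 < t) (ht1 : t ≤ 1) :
    0 < marg ((1 - t) • p + t • q) i a := by
  rw [marg_segment]
  exact add_pos_of_nonneg_of_pos (mul_nonneg (by linarith) (marg_nonneg hp i a)) (mul_pos ht0 hq)

def condMass (p : ((∀ j, A j) × Θ) → ℝ) (i : I) (a : A i) : ((∀ j, A j) × Θ) → ℝ :=
  fun x => p (Function.update x.1 i a, x.2)

lemma condBelief_eq_inv_smul_condMass (p : ((∀ j, A j) × Θ) → ℝ) (i : I) (a : A i) :
    condBelief p i a = (marg p i a)⁻¹ • condMass p i a := by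
  funext x
  simp [condBelief, condMass, div_eq_inv_mul]

lemma BRset_condBelief (v : ((∀ j, A j) × Θ) → ℝ) {p : ((∀ j, A j) × Θ) → ℝ} {i : I} {a : A i}
    (h : 0 < marg p i a) : BRset v i (condBelief p i a) = BRset v i (condMass p i a) := by
  rw [condBelief_eq_inv_smul_condMass, BRset_smul v i (inv_pos.2 h)]

lemma self_mem_BRset_condMass {p : ((∀ j, A j) × Θ) → ℝ} (hp : Obedient u p) (i : I) (a : A i) :
    a ∈ BRset (u i) i (condMass p i a) := by
  intro d
  set g : ((∀ j, A j) × Θ) → ℝ := fun y => (u i y - u i (Function.update y.1 i d, y.2)) * p y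
  have key : dev (u i) i a (condMass p i a) - dev (u i) i d (condMass p i a)
      = Fintype.card (A i) * ∑ x : (∀ j, A j) × Θ, if x.1 i = a then g x else 0 := by
    rw [← sum_filter, ← sum_update_eq_card_mul, dev, dev, ← sum_sub_distrib]
    refine sum_congr rfl fun x _ => ?_
    simp only [g, condMass, Function.update_idem]
    ring
  have := mul_nonneg (Nat.cast_nonneg (Fintype.card (A i)) : (0 : ℝ) ≤ _) (hp i a d)
  linarith

def Jeopardizes (P : Set (((∀ j, A j) × Θ) → ℝ)) (v : ((∀ j, A j) × Θ) → ℝ) (i : I)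
    (c a : A i) : Prop :=
  ∀ q ∈ P, 0 < marg q i a → c ∈ BRset v i (condBelief q i a)

-- Bundling `0 < marg w i a` into the property makes it realizable in `P` as soon as `a` is in
-- the support of some `q ∈ P` (`exists_reflectsJeopardy`), so it also yields `P`-maximal support.
def ReflectsJeopardy (P : Set (((∀ j, A j) × Θ) → ℝ)) (u : I → ((∀ j, A j) × Θ) → ℝ)
    (w : ((∀ j, A j) × Θ) → ℝ) (i : I) (a c : A i) : Prop :=
  0 < marg w i a ∧ (c ∈ BRset (u i) i (condBelief w i a) → Jeopardizes P (u i) i c a)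

lemma inheritedByMixtures_reflectsJeopardy (hP : ∀ p ∈ P, (∀ x, 0 ≤ p x) ∧ Obedient u p)
    (i : I) (a c : A i) : InheritedByMixtures P fun w => ReflectsJeopardy P u w i a c := by
  rintro w hw s hs l hl0 hl1 ⟨hwa, hwJ⟩
  have hra := marg_segment_pos (hP s hs).1 hwa hl0 hl1
  refine ⟨hra, fun hc => hwJ ?_⟩
  rw [BRset_condBelief _ hra] at hc
  rw [BRset_condBelief _ hwa]
  exact mem_BRset_of_mem_BRset_segment hl0 hl1 (self_mem_BRset_condMass (hP w hw).2 i a)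
    (self_mem_BRset_condMass (hP s hs).2 i a) hc

lemma exists_reflectsJeopardy {q : ((∀ j, A j) × Θ) → ℝ} (hq : q ∈ P) {i : I} {a : A i}
    (hqa : 0 < marg q i a) (c : A i) : ∃ w ∈ P, ReflectsJeopardy P u w i a c := by
  by_cases hc : Jeopardizes P (u i) i c a
  · exact ⟨q, hq, hqa, fun _ => hc⟩
  · simp only [Jeopardizes, not_forall] at hc
    obtain ⟨w, hw, hwa, hwc⟩ := hc
    exact ⟨w, hw, hwa, fun h => absurd h hwc⟩

def BeliefsDiffer (p : ((∀ j, A j) × Θ) → ℝ) (i : I) (a b : A i) : Prop :=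
  0 < marg p i a ∧ 0 < marg p i b ∧ condBelief p i a ≠ condBelief p i b

lemma condBelief_ne_condBelief_iff {p : ((∀ j, A j) × Θ) → ℝ} {i : I} {a b : A i}
    (ha : 0 < marg p i a) (hb : 0 < marg p i b) :
    condBelief p i a ≠ condBelief p i b ↔
      ∃ x, condMass p i a x * marg p i b - condMass p i b x * marg p i a ≠ 0 := by
  simp only [Ne, funext_iff, not_forall, condBelief, condMass, div_eq_div_iff ha.ne' hb.ne',
    sub_eq_zero]

lemma isOpen_setOf_beliefsDiffer (i : I) (a b : A i) :
    IsOpen {p : ((∀ j, A j) × Θ) → ℝ | BeliefsDiffer p i a b} := by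
  rw [isOpen_iff_mem_nhds]
  rintro p ⟨ha, hb, hne⟩
  have hcont : ∀ {c : A i}, 0 < marg p i c → ContinuousAt (fun q => condBelief q i c) p :=
    fun hc => continuousAt_pi.2 fun x =>
      (continuous_apply _).continuousAt.div (continuous_marg i _).continuousAt hc.ne'
  filter_upwards [(isOpen_lt continuous_const (continuous_marg i a)).mem_nhds ha,
    (isOpen_lt continuous_const (continuous_marg i b)).mem_nhds hb,
    ((hcont ha).ne_iff_eventually_ne (hcont hb)).1 hne] with q hqa hqb hqne
  exact ⟨hqa, hqb, hqne⟩

lemma frequently_beliefsDiffer_segment {p q : ((∀ j, A j) × Θ) → ℝ} (hp : ∀ x, 0 ≤ p x)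
    {i : I} {a b : A i} (hq : BeliefsDiffer q i a b) :
    ∃ᶠ t in 𝓝[>] (0 : ℝ), BeliefsDiffer ((1 - t) • p + t • q) i a b := by
  obtain ⟨ha, hb, hne⟩ := hq
  obtain ⟨x, hx⟩ := (condBelief_ne_condBelief_iff ha hb).1 hne
  refine ((frequently_segment_mul_sub_mul_ne_zero (a₀ := condMass p i a x) (b₀ := marg p i b)
    (c₀ := condMass p i b x) (d₀ := marg p i a) hx).and_eventually
    (Ioo_mem_nhdsGT one_pos)).mono ?_
  rintro t ⟨hcross, ht0, ht1⟩
  have hta := marg_segment_pos hp ha ht0 ht1.le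
  have htb := marg_segment_pos hp hb ht0 ht1.le
  refine ⟨hta, htb, (condBelief_ne_condBelief_iff hta htb).2 ⟨x, ?_⟩⟩
  simpa only [condMass, marg_segment, Pi.add_apply, Pi.smul_apply, smul_eq_mul] using hcross

lemma not_jeopardizes_and_jeopardizes {x : ((∀ j, A j) × Θ) → ℝ} (hx : x ∈ P)
    (hsep : Separated u x) {i : I} {a b : A i} (hd : BeliefsDiffer x i a b) (c : A i) :
    ¬ (Jeopardizes P (u i) i c a ∧ Jeopardizes P (u i) i c b) := by
  rintro ⟨hca, hcb⟩
  obtain ⟨ha, hb, hne⟩ := hd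
  exact Set.eq_empty_iff_forall_notMem.1 (hsep i a b ha hb hne) c ⟨hca x hx ha, hcb x hx hb⟩

lemma dense_setOf_beliefsDiffer (hP : Convex ℝ P) (hP0 : ∀ p ∈ P, ∀ x, 0 ≤ p x) {i : I}
    {a b : A i} (h : ∃ q ∈ P, BeliefsDiffer q i a b) : Dense {x : P | BeliefsDiffer x.1 i a b} := by
  obtain ⟨q, hq, hqd⟩ := h
  exact hP.dense_setOf_of_frequently_segment (φ := fun p => BeliefsDiffer p i a b) fun p hp =>
    ⟨q, hq, frequently_beliefsDiffer_segment (hP0 p hp) hqd⟩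

def DisjointJeopardy (P : Set (((∀ j, A j) × Θ) → ℝ)) (u : I → ((∀ j, A j) × Θ) → ℝ) : Prop :=
  ∀ p ∈ P, ∀ i : I, ∀ a b : A i, 0 < marg p i a → 0 < marg p i b →
    condBelief p i a ≠ condBelief p i b → ∀ c : A i,
      ¬ (Jeopardizes P (u i) i c a ∧ Jeopardizes P (u i) i c b)

lemma disjointJeopardy_of_dense (hD : Dense {x : P | Separated u x.1}) : DisjointJeopardy P u := by
  intro p hp i a b ha hb hne c
  obtain ⟨⟨x, hx⟩, hxsep, hxd⟩ := hD.exists_mem_open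
    ((isOpen_setOf_beliefsDiffer i a b).preimage continuous_subtype_val) ⟨⟨p, hp⟩, ha, hb, hne⟩
  exact not_jeopardizes_and_jeopardizes hx hxsep hxd c

lemma disjointJeopardy_of_minMixed {p₀ : ((∀ j, A j) × Θ) → ℝ} (hp₀ : p₀ ∈ P)
    (hsep : Separated u p₀) (hmin : MinMixed P p₀) : DisjointJeopardy P u := by
  obtain ⟨hsupp, hdiff⟩ := hmin
  intro p hp i a b ha hb hne
  exact not_jeopardizes_and_jeopardizes hp₀ hsep
    ⟨hsupp p hp i a ha, hsupp p hp i b hb, hdiff p hp i a b ha hb hne⟩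

lemma dense_setOf_separated_minMixed (hne : P.Nonempty) (hP : Convex ℝ P)
    (hbce : ∀ p ∈ P, (∀ x, 0 ≤ p x) ∧ Obedient u p) (hJ : DisjointJeopardy P u) :
    Dense {x : P | Separated u x ∧ MinMixed P x} := by
  have hreflect := dense_setOf_forall_of_inheritedByMixtures hP hne
    fun τ : Σ i, A i × A i => inheritedByMixtures_reflectsJeopardy hbce τ.1 τ.2.1 τ.2.2
  let differ (τ : {τ : Σ i, A i × A i // ∃ q ∈ P, BeliefsDiffer q τ.1 τ.2.1 τ.2.2}) : Set P :=
    {x | BeliefsDiffer x.1 τ.1.1 τ.1.2.1 τ.1.2.2}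
  have hopen : ∀ τ, IsOpen (differ τ) := fun τ =>
    (isOpen_setOf_beliefsDiffer _ _ _).preimage continuous_subtype_val
  have hdiffer : Dense (⋂ τ, differ τ) := dense_iInter_of_isOpen_of_finite hopen
    fun τ => dense_setOf_beliefsDiffer hP (fun p hp => (hbce p hp).1) τ.2
  refine (hreflect.inter_of_isOpen_right hdiffer (isOpen_iInter_of_finite hopen)).mono ?_
  rintro ⟨x, hx⟩ ⟨hxr, hxd⟩
  have hreflects : ∀ q ∈ P, ∀ i a c, 0 < marg q i a → ReflectsJeopardy P u x i a c :=
    fun q hq i a c hqa => hxr ⟨i, a, c⟩ (exists_reflectsJeopardy hq hqa c)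
  refine ⟨fun i a b ha hb hne => ?_, fun q hq i a hqa => (hreflects q hq i a a hqa).1,
    fun q hq i a b ha hb hne => ?_⟩
  · refine Set.eq_empty_iff_forall_notMem.2 fun c ⟨hca, hcb⟩ => hJ x hx i a b ha hb hne c ?_
    exact ⟨(hreflects x hx i a c ha).2 hca, (hreflects x hx i b c hb).2 hcb⟩
  · exact (Set.mem_iInter.1 hxd ⟨⟨i, a, b⟩, q, hq, ha, hb, hne⟩).2.2

end Game

theorem stmt9_general {I : Type} [Fintype I] [DecidableEq I]
    {A : I → Type} [∀ i, Fintype (A i)] [∀ i, DecidableEq (A i)]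
    {Θ : Type} [Fintype Θ]
    (π : Θ → ℝ)
    (u : ∀ i : I, ((∀ j, A j) × Θ) → ℝ)
    (P : Set (((∀ j, A j) × Θ) → ℝ))
    (hPne : P.Nonempty) (hPcv : Convex ℝ P)
    (hPbce : ∀ p ∈ P, IsOutcome π p ∧ Obedient u p) :
    (Dense {x : P | Separated u x.1} ↔
        ∃ p ∈ P, Separated u p ∧ MinMixed P p) ∧
    ((∃ p ∈ P, Separated u p ∧ MinMixed P p) ↔
        ∀ p ∈ P, ∀ i : I, ∀ ai bi : A i,
          0 < marg p i ai → 0 < marg p i bi →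
          condBelief p i ai ≠ condBelief p i bi →
          ∀ ci : A i,
            ¬ ((∀ q ∈ P, 0 < marg q i ai → ci ∈ BRset (u i) i (condBelief q i ai)) ∧
               (∀ q ∈ P, 0 < marg q i bi → ci ∈ BRset (u i) i (condBelief q i bi)))) := by
  have hbce : ∀ p ∈ P, (∀ x, 0 ≤ p x) ∧ Obedient u p := fun p hp =>
    ⟨(hPbce p hp).1.1, (hPbce p hp).2⟩
  have hdense := dense_setOf_separated_minMixed hPne hPcv hbce
  have hii : (∃ p ∈ P, Separated u p ∧ MinMixed P p) ↔ DisjointJeopardy P u := by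
    refine ⟨fun ⟨p, hp, hsep, hmin⟩ => disjointJeopardy_of_minMixed hp hsep hmin, fun h => ?_⟩
    have := hPne.to_subtype
    obtain ⟨⟨p, hp⟩, hsep, hmin⟩ := (hdense h).nonempty
    exact ⟨p, hp, hsep, hmin⟩
  exact ⟨⟨fun h => hii.2 (disjointJeopardy_of_dense h),
    fun h => (hdense (hii.1 h)).mono fun x hx => hx.1⟩, hii⟩

/-- for a non-empty closed convex set `P` of BCEs, the following
are equivalent: (i) the separated BCEs in `P` are dense in `P`; (ii) there is
a `P`-minimally mixed separated BCE in `P`; (iii) recommendations with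
distinct conditional beliefs under some `p ∈ P` have disjoint sets of
`P`-jeopardizing actions. -/
theorem stmt9 {I : Type} [Fintype I] [DecidableEq I]
    {A : I → Type} [∀ i, Fintype (A i)] [∀ i, DecidableEq (A i)]
    {Θ : Type} [Fintype Θ]
    (π : Θ → ℝ) (hπpos : ∀ θ, 0 < π θ) (hπ1 : ∑ θ, π θ = 1)
    (u : ∀ i : I, ((∀ j, A j) × Θ) → ℝ)
    (P : Set (((∀ j, A j) × Θ) → ℝ))
    (hPne : P.Nonempty) (hPcl : IsClosed P) (hPcv : Convex ℝ P)
    (hPbce : ∀ p ∈ P, IsOutcome π p ∧ Obedient u p) :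
    (Dense {x : P | Separated u x.1} ↔
        ∃ p ∈ P, Separated u p ∧ MinMixed P p) ∧
    ((∃ p ∈ P, Separated u p ∧ MinMixed P p) ↔
        ∀ p ∈ P, ∀ i : I, ∀ ai bi : A i,
          0 < marg p i ai → 0 < marg p i bi →
          condBelief p i ai ≠ condBelief p i bi →
          ∀ ci : A i,
            ¬ ((∀ q ∈ P, 0 < marg q i ai → ci ∈ BRset (u i) i (condBelief q i ai)) ∧
               (∀ q ∈ P, 0 < marg q i bi → ci ∈ BRset (u i) i (condBelief q i bi)))) :=
  stmt9_general π u P hPne hPcv hPbce
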